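/- Let C be a category, e ≥ 0, n ≥ 1, and let A be the pseudometric space on Fin n with d(i,j) = 2e for i ≠ j and d(i,i) = 0. Given a functor G : spacetime(A) ⥤ C, set U_i := G ∘ η(i) for each i, and for i ≠ j and s ∈ ℝ define Φ_ij(s) := G applied to the relation (i,s) ≤ (j, s+2e). Then: (a) for each i ≠ j the family Φ_ij(s) : U_i(s) → U_j(s+2e) is natural in s, defining a natural transformation Φ_ij : U_i ⟶ U_j T_{2e}; (b) for all distinct i, j and all s ∈ ℝ, Φ_ji(s+2e) ∘ Φ_ij(s) = U_i applied to (s ≤ s+4e); and (c) for all pairwise distinct i, j, k and all s ∈ ℝ, Φ_jk(s+2e) ∘ Φ_ij(s) = (U_k applied to (s+2e ≤ s+4e)) ∘ Φ_ik(s). -/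

import Mathlib

open CategoryTheory CategoryTheory.Limits

noncomputable section

/-- Translation functor `T_e : a ↦ a + e` on `ℝ`, viewed as a preorder category. -/
def Tr (e : ℝ) : ℝ ⥤ ℝ :=
  Monotone.functor (f := fun a : ℝ => a + e) (fun _ _ h => by dsimp only; linarith)

@[simp] theorem Tr_obj (e a : ℝ) : (Tr e).obj a = a + e := rfl

theorem Tr_comp (e f : ℝ) : Tr e ⋙ Tr f = Tr (e + f) :=
  CategoryTheory.Functor.ext (fun a => add_assoc a e f) (fun _ _ _ => Subsingleton.elim _ _)

/-- The canonical natural transformation `U σ_e : U ⟶ U T_e` for `0 ≤ e`,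
whose component at `a` is `U` applied to `a ≤ a + e`. -/
def sigmaNat {C : Type*} [Category C] (U : ℝ ⥤ C) (e : ℝ) (he : 0 ≤ e) :
    U ⟶ Tr e ⋙ U where
  app a := U.map (homOfLE (le_add_of_nonneg_right he))
  naturality a b f := by
    dsimp [Tr]
    rw [← Functor.map_comp, ← Functor.map_comp]
    exact congrArg U.map (Subsingleton.elim _ _)

/-- `(Φ, Ψ)` is an `e`-interleaving of `U` and `V`:
`(Ψ whiskered by T_e) ∘ Φ = U σ_{2e}` and `(Φ whiskered by T_e) ∘ Ψ = V σ_{2e}`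
(the `eqToHom` transports along the equality of functors `T_{2e} = T_e ⋙ T_e`). -/
def IsInterleaving {C : Type*} [Category C] (e : ℝ) (he : 0 ≤ e) (U V : ℝ ⥤ C)
    (Φ : U ⟶ Tr e ⋙ V) (Ψ : V ⟶ Tr e ⋙ U) : Prop :=
  Φ ≫ Functor.whiskerLeft (Tr e) Ψ =
      sigmaNat U (2 * e) (by linarith) ≫ eqToHom (by rw [two_mul, ← Tr_comp, Functor.assoc]) ∧
    Ψ ≫ Functor.whiskerLeft (Tr e) Φ =
      sigmaNat V (2 * e) (by linarith) ≫ eqToHom (by rw [two_mul, ← Tr_comp, Functor.assoc])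

/-- `U` and `V` are `e`-interleaved. -/
def Interleaved {C : Type*} [Category C] (e : ℝ) (U V : ℝ ⥤ C) : Prop :=
  ∃ (he : 0 ≤ e) (Φ : U ⟶ Tr e ⋙ V) (Ψ : V ⟶ Tr e ⋙ U), IsInterleaving e he U V Φ Ψ

/-- The interleaving distance: the infimum in `[0,∞]` of the set of `e ≥ 0` such that
`U` and `V` are `e`-interleaved (`∞` if this set is empty). -/
noncomputable def dInt {C : Type*} [Category C] (U V : ℝ ⥤ C) : ENNReal :=
  sInf (ENNReal.ofReal '' {e : ℝ | Interleaved e U V})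

/-- The spacetime of a pseudometric space `M`: the set `M × ℝ` (encoded as a structure
with a point component and a time component). -/
@[ext] structure Spacetime (M : Type*) [PseudoMetricSpace M] where
  pos : M
  time : ℝ

/-- The spacetime preorder: `(x,s) ≤ (y,t)` iff `dist x y ≤ t - s`. -/
instance Spacetime.instPreorder (M : Type*) [PseudoMetricSpace M] :
    Preorder (Spacetime M) where
  le p q := dist p.pos q.pos ≤ q.time - p.time
  le_refl p := by simp
  le_trans p q r h₁ h₂ := by
    have h := dist_triangle p.pos q.pos r.pos
    change dist p.pos q.pos ≤ q.time - p.time at h₁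
    change dist q.pos r.pos ≤ r.time - q.time at h₂
    change dist p.pos r.pos ≤ r.time - p.time
    linarith

theorem Spacetime.le_def {M : Type*} [PseudoMetricSpace M] (p q : Spacetime M) :
    p ≤ q ↔ dist p.pos q.pos ≤ q.time - p.time := Iff.rfl

/-- The constant world line `η(x) : ℝ ⥤ Spacetime M` of a point `x`, i.e. the functor
induced by the monotone map `s ↦ (x, s)`. -/
def eta {M : Type*} [PseudoMetricSpace M] (x : M) : ℝ ⥤ Spacetime M :=
  Monotone.functor (f := fun s : ℝ => (⟨x, s⟩ : Spacetime M))
    (fun a b h => show dist x x ≤ b - a by rw [dist_self]; linarith)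

/-- With `Fin n` carrying the pseudometric `d(i,j) = 2e` for `i ≠ j` (`0` on the
diagonal), the morphism `Φ_ij(s) := G ((i,s) ≤ (j,s+2e))`. -/
def PhiMap {C : Type*} [Category C] {n : ℕ} {e : ℝ} [PseudoMetricSpace (Fin n)]
    (he : 0 ≤ e) (hd : ∀ i j : Fin n, dist i j = if i = j then 0 else 2 * e)
    (G : Spacetime (Fin n) ⥤ C) (i j : Fin n) (s : ℝ) :
    G.obj (⟨i, s⟩ : Spacetime (Fin n)) ⟶ G.obj (⟨j, s + 2 * e⟩ : Spacetime (Fin n)) :=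
  G.map (homOfLE (show (⟨i, s⟩ : Spacetime (Fin n)) ≤ ⟨j, s + 2 * e⟩ from
    show dist i j ≤ s + 2 * e - s by rw [hd]; split_ifs <;> linarith))

namespace CategoryTheory.Functor

variable {P C : Type*} [Category P] [Quiver.IsThin P] [Category C] (G : P ⥤ C)

theorem map_comp_eqToHom_of_isThin {X Y Z : P} (f : X ⟶ Y) (g : X ⟶ Z) (hYZ : Y = Z)
    (h : G.obj Y = G.obj Z) : G.map f ≫ eqToHom h = G.map g := by
  subst hYZ
  rw [eqToHom_refl, Category.comp_id, Subsingleton.elim f g]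

theorem map_comp_eq_map_comp_of_isThin {X Y Y' Z : P} (f : X ⟶ Y) (g : Y ⟶ Z) (f' : X ⟶ Y')
    (g' : Y' ⟶ Z) : G.map f ≫ G.map g = G.map f' ≫ G.map g' := by
  rw [← G.map_comp, ← G.map_comp, Subsingleton.elim (f ≫ g) (f' ≫ g')]

end CategoryTheory.Functor

/-- Let `A` be the pseudometric space on `Fin n` (`n ≥ 1`) with `d(i,j) = 2e` for
`i ≠ j`, let `G : Spacetime A ⥤ C`, set `U_i := G ∘ η(i)`, and let
`Φ_ij(s) := G ((i,s) ≤ (j,s+2e))`. Then: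
(a) each family `Φ_ij` is natural in `s`, i.e. defines a natural transformation
`U_i ⟶ U_j T_{2e}`;
(b) `Φ_ji(s+2e) ∘ Φ_ij(s) = U_i (s ≤ s+4e)` for distinct `i, j`; and
(c) `Φ_jk(s+2e) ∘ Φ_ij(s) = U_k (s+2e ≤ s+4e) ∘ Φ_ik(s)` for pairwise distinct
`i, j, k` (the `eqToHom`s transport along `s + 4e = s + 2e + 2e`). -/
theorem coherent_discrete_family {C : Type*} [Category C] (n : ℕ) (e : ℝ)
    (he : 0 ≤ e) [PseudoMetricSpace (Fin n)]
    (hd : ∀ i j : Fin n, dist i j = if i = j then 0 else 2 * e)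
    (G : Spacetime (Fin n) ⥤ C) :
    (∀ i j : Fin n, i ≠ j → ∀ (s t : ℝ) (hst : s ≤ t),
      (eta i ⋙ G).map (homOfLE hst) ≫ PhiMap he hd G i j t =
        PhiMap he hd G i j s ≫
          (eta j ⋙ G).map (homOfLE (show s + 2 * e ≤ t + 2 * e by linarith))) ∧
    (∀ i j : Fin n, i ≠ j → ∀ s : ℝ,
      PhiMap he hd G i j s ≫ PhiMap he hd G j i (s + 2 * e) =
        (eta i ⋙ G).map (homOfLE (show s ≤ s + 4 * e by linarith)) ≫
          eqToHom (congrArg (eta i ⋙ G).obj (by ring : s + 4 * e = s + 2 * e + 2 * e))) ∧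
    (∀ i j k : Fin n, i ≠ j → j ≠ k → i ≠ k → ∀ s : ℝ,
      PhiMap he hd G i j s ≫ PhiMap he hd G j k (s + 2 * e) =
        PhiMap he hd G i k s ≫
          (eta k ⋙ G).map (homOfLE (show s + 2 * e ≤ s + 4 * e by linarith)) ≫
          eqToHom (congrArg (eta k ⋙ G).obj (by ring : s + 4 * e = s + 2 * e + 2 * e))) := by
  have endpoint_eq (x : Fin n) (s : ℝ) :
      (⟨x, s + 4 * e⟩ : Spacetime (Fin n)) = ⟨x, s + 2 * e + 2 * e⟩ := by
    congr 1; ring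
  refine ⟨fun i j _ s t _ => ?_, fun i j _ s => ?_, fun i j k _ _ _ s => ?_⟩
  · exact G.map_comp_eq_map_comp_of_isThin _ _ _ _
  · exact (G.map_comp _ _).symm.trans
      (G.map_comp_eqToHom_of_isThin _ _ (endpoint_eq i s) _).symm
  · exact (G.map_comp _ _).symm.trans
      ((G.map_comp_eqToHom_of_isThin _ _ (endpoint_eq k s) _).symm.trans
        (G.map_comp_assoc _ _ _))

end
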